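/- arXiv:2302.01827 — 4 statements merged into one kernel-verified Lean document; each statement's English description precedes it below -/
import Mathlib

section
/- The equation α·e^α − e^α + 1 = α³ has exactly the solutions α = 1 and one further solution α* in the interval (1.7, 1.9) among reals α ≥ 1; moreover, for α ∈ (1, α*), we have α·e^α − e^α + 1 < α³ (i.e., p(α) < α where p(α) = (e^α − (e^α−1)/α)/α). -/
/- Auxiliary function: Fc α = α³ − (α·e^α − e^α + 1). -/
noncomputable def Fc : ℝ → ℝ := fun x => x ^ 3 - (x * Real.exp x - Real.exp x + 1)

lemma e15_lt : Real.exp 1.5 < 4.49 := by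
  have h2 : Real.exp 1.5 ^ 2 = Real.exp 1 ^ 3 := by
    rw [← Real.exp_nat_mul, ← Real.exp_nat_mul]; norm_num
  have h3 : Real.exp 1 ^ 3 < 2.7182818286 ^ 3 :=
    pow_lt_pow_left₀ Real.exp_one_lt_d9 (Real.exp_pos 1).le (by norm_num)
  nlinarith [Real.exp_pos 1.5]

lemma e17_lt : Real.exp 1.7 < 5.49 := by
  have h2 : Real.exp 1.7 ^ 10 = Real.exp 1 ^ 17 := by
    rw [← Real.exp_nat_mul, ← Real.exp_nat_mul]; norm_num
  have h3 : Real.exp 1 ^ 17 < 2.7182818286 ^ 17 :=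
    pow_lt_pow_left₀ Real.exp_one_lt_d9 (Real.exp_pos 1).le (by norm_num)
  have h4 : (2.7182818286:ℝ) ^ 17 < 5.49 ^ 10 := by norm_num
  exact lt_of_pow_lt_pow_left₀ 10 (by norm_num) (by linarith [h2 ▸ lt_trans h3 h4])

lemma e17_gt : (5.45:ℝ) < Real.exp 1.7 := by
  have h2 : Real.exp 1.7 ^ 10 = Real.exp 1 ^ 17 := by
    rw [← Real.exp_nat_mul, ← Real.exp_nat_mul]; norm_num
  have h3 : (2.7182818283:ℝ) ^ 17 < Real.exp 1 ^ 17 :=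
    pow_lt_pow_left₀ Real.exp_one_gt_d9 (by norm_num) (by norm_num)
  have h4 : (5.45:ℝ) ^ 10 < 2.7182818283 ^ 17 := by norm_num
  exact lt_of_pow_lt_pow_left₀ 10 (Real.exp_pos _).le (by linarith [h2 ▸ lt_trans h4 h3])

lemma e19_gt : (6.52:ℝ) < Real.exp 1.9 := by
  have h2 : Real.exp 1.9 ^ 10 = Real.exp 1 ^ 19 := by
    rw [← Real.exp_nat_mul, ← Real.exp_nat_mul]; norm_num
  have h3 : (2.7182818283:ℝ) ^ 19 < Real.exp 1 ^ 19 :=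
    pow_lt_pow_left₀ Real.exp_one_gt_d9 (by norm_num) (by norm_num)
  have h4 : (6.52:ℝ) ^ 10 < 2.7182818283 ^ 19 := by norm_num
  exact lt_of_pow_lt_pow_left₀ 10 (Real.exp_pos _).le (by linarith [h2 ▸ lt_trans h4 h3])

lemma hF (x : ℝ) : HasDerivAt Fc (3 * x ^ 2 - x * Real.exp x) x := by
  have h1 : HasDerivAt (fun x : ℝ => x ^ 3) (3 * x ^ 2) x := by
    simpa using hasDerivAt_pow 3 x
  have h2 : HasDerivAt (fun x : ℝ => x * Real.exp x - Real.exp x + 1)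
      (1 * Real.exp x + x * Real.exp x - Real.exp x) x :=
    by simpa using
      (((hasDerivAt_id x).mul (Real.hasDerivAt_exp x)).sub (Real.hasDerivAt_exp x)).add_const 1
  have : HasDerivAt Fc (3 * x ^ 2 - (1 * Real.exp x + x * Real.exp x - Real.exp x)) x := h1.sub h2
  convert this using 1; ring

lemma Fc_cont : Continuous Fc := by
  unfold Fc; continuity

lemma Fderiv_pos : ∀ x ∈ Set.Ioo (1:ℝ) 1.5, 0 < 3 * x ^ 2 - x * Real.exp x := by
  intro x hx
  obtain ⟨h1, h2⟩ := hx
  have hc := convexOn_exp.2 (Set.mem_univ (1:ℝ)) (Set.mem_univ (1.5:ℝ))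
    (show (0:ℝ) ≤ 3 - 2*x by linarith) (show (0:ℝ) ≤ 2*x - 2 by linarith)
    (show (3 - 2*x) + (2*x - 2) = (1:ℝ) by ring)
  simp only [smul_eq_mul] at hc
  have hx' : (3 - 2*x) * (1:ℝ) + (2*x - 2) * 1.5 = x := by ring
  rw [hx'] at hc
  have he1 := Real.exp_one_lt_d9
  have he15 := e15_lt
  have hexp_lt : Real.exp x < 3 * x := by nlinarith
  nlinarith

lemma Fderiv_neg : ∀ x ∈ Set.Ioi (1.7:ℝ), 3 * x ^ 2 - x * Real.exp x < 0 := by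
  intro x hx
  simp only [Set.mem_Ioi] at hx
  have he17 := e17_gt
  have htan : Real.exp 1.7 * (1 + (x - 1.7)) ≤ Real.exp x := by
    have := Real.add_one_le_exp (x - 1.7)
    calc Real.exp 1.7 * (1 + (x - 1.7)) ≤ Real.exp 1.7 * Real.exp (x - 1.7) := by
          nlinarith [Real.exp_pos (1.7:ℝ)]
      _ = Real.exp x := by rw [← Real.exp_add]; ring_nf
  have h3x : 3 * x < Real.exp x := by nlinarith [Real.exp_pos (1.7:ℝ)]
  nlinarith

lemma F_mono : StrictMonoOn Fc (Set.Icc (1:ℝ) 1.5) := by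
  apply strictMonoOn_of_deriv_pos (convex_Icc _ _) Fc_cont.continuousOn
  intro x hx
  rw [interior_Icc] at hx
  rw [(hF x).deriv]
  exact Fderiv_pos x hx

lemma F_anti : StrictAntiOn Fc (Set.Ici (1.7:ℝ)) := by
  apply strictAntiOn_of_deriv_neg (convex_Ici _) Fc_cont.continuousOn
  intro x hx
  rw [interior_Ici] at hx
  rw [(hF x).deriv]
  exact Fderiv_neg x hx

lemma F_mid_pos : ∀ x ∈ Set.Icc (1.5:ℝ) 1.7, 0 < Fc x := by
  intro x hx
  obtain ⟨h1, h2⟩ := hx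
  have hc := convexOn_exp.2 (Set.mem_univ (1.5:ℝ)) (Set.mem_univ (1.7:ℝ))
    (show (0:ℝ) ≤ 5*(1.7 - x) by linarith) (show (0:ℝ) ≤ 5*(x - 1.5) by linarith)
    (show 5*(1.7 - x) + 5*(x - 1.5) = (1:ℝ) by ring)
  simp only [smul_eq_mul] at hc
  have hx' : 5*(1.7 - x) * (1.5:ℝ) + 5*(x - 1.5) * 1.7 = x := by ring
  rw [hx'] at hc
  have he15 := e15_lt
  have he17 := e17_lt
  have hexp_lt : Real.exp x ≤ 5 * x - 3.01 := by nlinarith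
  show 0 < x ^ 3 - (x * Real.exp x - Real.exp x + 1)
  nlinarith [sq_nonneg (x - 1.7), sq_nonneg (x - 1.5), mul_nonneg (sub_nonneg.2 h1) (sub_nonneg.2 h2),
    Real.exp_pos x]

lemma F_one : Fc 1 = 0 := by simp [Fc]

lemma F17_pos : 0 < Fc 1.7 := F_mid_pos 1.7 (by norm_num)

lemma F19_neg : Fc 1.9 < 0 := by
  have := e19_gt
  show (1.9:ℝ) ^ 3 - (1.9 * Real.exp 1.9 - Real.exp 1.9 + 1) < 0
  nlinarith

/-- The equation `α·e^α − e^α + 1 = α³` has exactly the solutions `α = 1` and one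
further solution `α* ∈ (1.7, 1.9)` among reals `α ≥ 1`; moreover, for `α ∈ (1, α*)`,
we have `α·e^α − e^α + 1 < α³`. -/
theorem stmt13 :
    ∃ αs : ℝ, αs ∈ Set.Ioo (1.7 : ℝ) 1.9 ∧
      (∀ α : ℝ, 1 ≤ α →
        (α * Real.exp α - Real.exp α + 1 = α ^ 3 ↔ (α = 1 ∨ α = αs))) ∧
      ∀ α ∈ Set.Ioo (1 : ℝ) αs, α * Real.exp α - Real.exp α + 1 < α ^ 3 := by
  -- obtain the second root by the intermediate value theorem
  have hIVT : (0:ℝ) ∈ Fc '' Set.Ioo (1.7:ℝ) 1.9 := by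
    apply intermediate_value_Ioo' (by norm_num) Fc_cont.continuousOn
    exact ⟨F19_neg, F17_pos⟩
  obtain ⟨αs, hαs, hFαs⟩ := hIVT
  obtain ⟨hαs1, hαs2⟩ := hαs
  -- positivity of Fc on (1, αs)
  have hpos : ∀ α : ℝ, 1 < α → α < αs → 0 < Fc α := by
    intro α h1 h2
    rcases le_or_gt α 1.5 with h | h
    · have := F_mono (Set.mem_Icc.2 ⟨le_refl 1, by norm_num⟩) (Set.mem_Icc.2 ⟨h1.le, h⟩) h1
      rwa [F_one] at this
    · rcases le_or_gt α 1.7 with h' | h'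
      · exact F_mid_pos α ⟨h.le, h'⟩
      · have := F_anti (Set.mem_Ici.2 h'.le) (Set.mem_Ici.2 (le_trans h'.le h2.le)) h2
        rwa [hFαs] at this
  refine ⟨αs, ⟨hαs1, hαs2⟩, ?_, ?_⟩
  · intro α hα
    constructor
    · intro heq
      have hFα : Fc α = 0 := by simp only [Fc]; linarith
      by_contra hcon
      push_neg at hcon
      obtain ⟨hne1, hnes⟩ := hcon
      have h1 : 1 < α := lt_of_le_of_ne hα (Ne.symm hne1)
      rcases le_or_gt α 1.7 with h | h
      · rcases le_or_gt α 1.5 with h' | h'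
        · have := F_mono (Set.mem_Icc.2 ⟨le_refl 1, by norm_num⟩)
            (Set.mem_Icc.2 ⟨hα, h'⟩) h1
          rw [F_one, hFα] at this; exact lt_irrefl 0 this
        · have := F_mid_pos α ⟨h'.le, h⟩
          rw [hFα] at this; exact lt_irrefl 0 this
      · exact hnes (F_anti.injOn (Set.mem_Ici.2 h.le) (Set.mem_Ici.2 hαs1.le)
          (by rw [hFα, hFαs]))
    · rintro (rfl | rfl)
      · norm_num
      · simp only [Fc] at hFαs; linarith
  · intro α hα
    obtain ⟨h1, h2⟩ := hα
    have := hpos α h1 h2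
    unfold Fc at this; linarith
end

section
/- Let B ≥ 1 be an integer, ℓ ∈ {0,1,…,B}, α ≥ 1, e := e_B := (1+1/B)^B, q := e^{α/B}, A := B(q−1). Define Φ := Σ over the B−ℓ 'non-predicted' positions of φ_i, Ψ := ℓ + (B−ℓ)·(e^{αℓ/B}−1)/(e^α−1), and Ω := (1/A)·(1/(e^α−1))·(ℓ e^α − (e^α − e^{α(B−ℓ)/B})/(q−1)), where φ_i := (B−ℓ)·((q−1)/(e^α−1))·q^{B+ℓ−i'} + (1/A)·(e^α − q^{B−i'})/(e^α−1) summed over i' = 1,…,B−ℓ (reindexed). Then Φ + Ψ + Ω = B + (1/(e^α−1))·(1/A)·(B·e^α − (e^α−1)/(q−1)), a quantity independent of ℓ. -/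
/-- Total coefficient-mass computation in the consistency proof: with `B ≥ 1`,
`ℓ ∈ {0,…,B}`, `α ≥ 1`, `e := (1+1/B)^B`, `q := e^(α/B)`, `A := B(q−1)`, summing
the coefficients `φ_{i'} = (B−ℓ)·((q−1)/(e^α−1))·q^(B+ℓ−i') + (1/A)·(e^α − q^(B−i'))/(e^α−1)`
over the `B−ℓ` non-predicted positions, together with
`Ψ := ℓ + (B−ℓ)·(e^(αℓ/B)−1)/(e^α−1)` and
`Ω := (1/A)·(1/(e^α−1))·(ℓ e^α − (e^α − e^(α(B−ℓ)/B))/(q−1))`, yields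
`Φ + Ψ + Ω = B + (1/(e^α−1))·(1/A)·(B·e^α − (e^α−1)/(q−1))`, independent of `ℓ`. -/
theorem stmt15 (B l : ℕ) (hB : 1 ≤ B) (hlB : l ≤ B) (α : ℝ) (hα : 1 ≤ α) :
    let e : ℝ := (1 + 1 / (B : ℝ)) ^ (B : ℝ)
    let q : ℝ := e ^ (α / (B : ℝ))
    let A : ℝ := (B : ℝ) * (q - 1)
    let Φ : ℝ := ∑ i ∈ Finset.Icc (l + 1) B,
      (((B : ℝ) - (l : ℝ)) * ((q - 1) / (e ^ α - 1)) * q ^ (B + l - i) +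
        1 / A * (e ^ α - q ^ (B - i)) / (e ^ α - 1))
    let Ψ : ℝ := (l : ℝ) + ((B : ℝ) - (l : ℝ)) *
      (e ^ (α * (l : ℝ) / (B : ℝ)) - 1) / (e ^ α - 1)
    let Ω : ℝ := 1 / A * (1 / (e ^ α - 1)) *
      ((l : ℝ) * e ^ α - (e ^ α - e ^ (α * ((B : ℝ) - (l : ℝ)) / (B : ℝ))) / (q - 1))
    Φ + Ψ + Ω = (B : ℝ) + 1 / (e ^ α - 1) * (1 / A) * ((B : ℝ) * e ^ α - (e ^ α - 1) / (q - 1)) := by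
  intro e q A Φ Ψ Ω
  have hB0 : (0:ℝ) < B := by exact_mod_cast hB
  have hb1 : (1:ℝ) < 1 + 1 / B := by
    have : (0:ℝ) < 1 / B := by positivity
    linarith
  have he1 : 1 < e := (Real.one_lt_rpow_iff_of_pos (by linarith)).mpr (Or.inl ⟨hb1, hB0⟩)
  have he0 : (0:ℝ) < e := lt_trans one_pos he1
  have hq1 : 1 < q := (Real.one_lt_rpow_iff_of_pos he0).mpr (Or.inl ⟨he1, by positivity⟩)
  have hE1 : 1 < e ^ α := (Real.one_lt_rpow_iff_of_pos he0).mpr (Or.inl ⟨he1, by linarith⟩)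
  have hq1' : q - 1 ≠ 0 := by linarith
  have hE1' : e ^ α - 1 ≠ 0 := by linarith
  have hA : A ≠ 0 := ne_of_gt (mul_pos hB0 (by linarith))
  have hpow : ∀ m : ℕ, q ^ m = e ^ (α * m / B) := by
    intro m
    rw [← Real.rpow_natCast q m]
    show (e ^ (α / (B:ℝ))) ^ (m:ℝ) = _
    rw [← Real.rpow_mul he0.le]
    congr 1
    ring
  have hEq : e ^ α = q ^ B := by
    rw [hpow B, mul_div_assoc, div_self (ne_of_gt hB0), mul_one]
  have hn : B + 1 - (l + 1) = B - l := by omega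
  have hΦ : Φ = ((B:ℝ) - l) * ((q - 1) / (e ^ α - 1)) * q ^ l * ((q ^ (B - l) - 1) / (q - 1))
      + 1 / A * (((B:ℝ) - l) * e ^ α - (q ^ (B - l) - 1) / (q - 1)) / (e ^ α - 1) := by
    have hgeom : ∑ j ∈ Finset.range (B - l), q ^ j = (q ^ (B - l) - 1) / (q - 1) :=
      geom_sum_eq hq1.ne' _
    have hcard : ((B - l : ℕ) : ℝ) = (B:ℝ) - l := by
      rw [Nat.cast_sub hlB]
    calc Φ = ∑ j ∈ Finset.range (B - l),
        (((B : ℝ) - l) * ((q - 1) / (e ^ α - 1)) * (q ^ l * q ^ j) +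
          1 / A * (e ^ α - q ^ j) / (e ^ α - 1)) := by
          show (∑ i ∈ Finset.Icc (l + 1) B, _) = _
          rw [← Finset.Ico_add_one_right_eq_Icc, Finset.sum_Ico_eq_sum_range, hn,
            ← Finset.sum_range_reflect]
          refine Finset.sum_congr rfl fun j hj => ?_
          have hj' := Finset.mem_range.mp hj
          have h1 : B + l - (l + 1 + (B - l - 1 - j)) = l + j := by omega
          have h2 : B - (l + 1 + (B - l - 1 - j)) = j := by omega
          rw [h1, h2, pow_add]
      _ = _ := by
          rw [Finset.sum_add_distrib, ← Finset.mul_sum, ← Finset.mul_sum, hgeom]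
          have : ∑ j ∈ Finset.range (B - l), 1 / A * (e ^ α - q ^ j) / (e ^ α - 1)
              = 1 / A * (((B:ℝ) - l) * e ^ α - (q ^ (B - l) - 1) / (q - 1)) / (e ^ α - 1) := by
            rw [← Finset.sum_div, ← Finset.mul_sum, Finset.sum_sub_distrib,
              Finset.sum_const, Finset.card_range, hgeom, nsmul_eq_mul, hcard]
          rw [this]
          ring
  have hl' : e ^ (α * (l:ℝ) / B) = q ^ l := (hpow l).symm
  have hBl' : e ^ (α * ((B:ℝ) - l) / B) = q ^ (B - l) := by
    rw [hpow (B - l), Nat.cast_sub hlB]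
  have hBsplit : q ^ B = q ^ l * q ^ (B - l) := by
    rw [← pow_add]; congr 1; omega
  have hXY : q ^ l * q ^ (B - l) - 1 ≠ 0 := by rw [← hBsplit, ← hEq]; exact hE1'
  rw [hΦ]
  simp only [Ψ, Ω, hl', hBl', hEq, hBsplit]
  field_simp
  ring
end

section
/- For α ≥ 1 and x ∈ (0,1], (e^{αx} − 1)/(e^α − 1) ≥ x·e^{α(x−1)}; more relevantly, for 1 ≤ B ≤ B', α ≥ 1, and x ∈ [0,1], (e_{B'}^{αx} − 1)/(e_{B'}^α − 1) ≤ (e_B^{αx} − 1)/(e_B^α − 1), where e_B := (1+1/B)^B. -/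
open Real Set

/-- Slope monotonicity for `t ↦ t^x` with `x ∈ [0,1]`: the chord from `1` is non-increasing. -/
lemma key_slope {u v x : ℝ} (hu : 1 < u) (huv : u ≤ v) (hx0 : 0 ≤ x) (hx1 : x ≤ 1) :
    (v ^ x - 1) / (v - 1) ≤ (u ^ x - 1) / (u - 1) := by
  have hconc := (Real.concaveOn_rpow hx0 hx1).neg
  have h := hconc.secant_mono (a := 1) (x := u) (y := v)
    (by simp : (1:ℝ) ∈ Ici (0:ℝ)) (le_trans zero_le_one hu.le)
    (le_trans zero_le_one (hu.le.trans huv))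
    (ne_of_gt hu) (ne_of_gt (hu.trans_le huv)) huv
  simp only [Pi.neg_apply, Real.one_rpow] at h
  have e1 : (-(u ^ x) - -(1:ℝ)) / (u - 1) = -((u ^ x - 1) / (u - 1)) := by ring
  have e2 : (-(v ^ x) - -(1:ℝ)) / (v - 1) = -((v ^ x - 1) / (v - 1)) := by ring
  rw [e1, e2] at h
  linarith

lemma eB_lt {B : ℝ} (hB : 1 ≤ B) : 1 < (1 + 1 / B) ^ B := by
  have hB0 : (0:ℝ) < B := lt_of_lt_of_le one_pos hB
  have hb : (1:ℝ) < 1 + 1 / B := by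
    have : (0:ℝ) < 1 / B := by positivity
    linarith
  exact (Real.one_lt_rpow_iff_of_pos (by linarith)).2 (Or.inl ⟨hb, hB0⟩)

lemma eB_mono {B B' : ℝ} (hB : 1 ≤ B) (hBB : B ≤ B') :
    (1 + 1 / B) ^ B ≤ (1 + 1 / B') ^ B' := by
  have hB0 : (0:ℝ) < B := lt_of_lt_of_le one_pos hB
  have hB'0 : (0:ℝ) < B' := lt_of_lt_of_le hB0 hBB
  have hp : (1:ℝ) ≤ B' / B := (one_le_div hB0).2 hBB
  have hbern := one_add_mul_self_le_rpow_one_add (s := 1 / B')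
    ((one_div_pos.2 hB'0).le.trans' (by norm_num)) hp
  have hval : 1 + B' / B * (1 / B') = 1 + 1 / B := by field_simp
  rw [hval] at hbern
  have h2 : (1 + 1 / B) ^ B ≤ ((1 + 1 / B') ^ (B' / B)) ^ B :=
    Real.rpow_le_rpow (by positivity) hbern hB0.le
  rwa [← Real.rpow_mul (by positivity), div_mul_cancel₀ _ (ne_of_gt hB0)] at h2

/-- For `α ≥ 1` and `x ∈ (0,1]`, `(e^(αx) − 1)/(e^α − 1) ≥ x·e^(α(x−1))`; and for
`1 ≤ B ≤ B'`, `α ≥ 1`, `x ∈ [0,1]`,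
`(e_{B'}^(αx) − 1)/(e_{B'}^α − 1) ≤ (e_B^(αx) − 1)/(e_B^α − 1)`,
where `e_B := (1+1/B)^B`. -/
theorem stmt17 :
    (∀ α : ℝ, 1 ≤ α → ∀ x ∈ Set.Ioc (0 : ℝ) 1,
      x * Real.exp (α * (x - 1)) ≤ (Real.exp (α * x) - 1) / (Real.exp α - 1)) ∧
    (∀ B B' α x : ℝ, 1 ≤ B → B ≤ B' → 1 ≤ α → x ∈ Set.Icc (0 : ℝ) 1 →
      (((1 + 1 / B') ^ B') ^ (α * x) - 1) / (((1 + 1 / B') ^ B') ^ α - 1) ≤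
        (((1 + 1 / B) ^ B) ^ (α * x) - 1) / (((1 + 1 / B) ^ B) ^ α - 1)) := by
  constructor
  · intro α hα x hx
    obtain ⟨hx0, hx1⟩ := hx
    have hden : 0 < Real.exp α - 1 := by
      have := Real.add_one_le_exp α
      linarith
    rw [le_div_iff₀ hden]
    -- convexity of exp at points -α and 0 with weights x, 1-x
    have hconv := convexOn_exp.2 (Set.mem_univ (-α)) (Set.mem_univ 0)
      hx0.le (by linarith : (0:ℝ) ≤ 1 - x) (by ring)
    simp only [smul_eq_mul, mul_neg, mul_zero, add_zero, Real.exp_zero, mul_one] at hconv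
    -- hconv : exp (-(x * α)) ≤ x * exp (-α) + (1 - x)
    have hE : Real.exp (-(x * α)) * Real.exp (α * x) = 1 := by
      rw [← Real.exp_add]; ring_nf; exact Real.exp_zero
    have hEneg : Real.exp (-α) * Real.exp α = 1 := by
      rw [← Real.exp_add]; simp
    have hsplit : Real.exp (α * (x - 1)) = Real.exp (α * x) * Real.exp (-α) := by
      rw [← Real.exp_add]; ring_nf
    have hE1 : 0 < Real.exp (α * x) := Real.exp_pos _
    have hE2 : 0 < Real.exp (-α) := Real.exp_pos _
    have hE3 : 0 < Real.exp α := Real.exp_pos _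
    have h1 : 1 ≤ x * (Real.exp (-α) * Real.exp (α * x)) + (1 - x) * Real.exp (α * x) := by
      nlinarith [mul_le_mul_of_nonneg_right hconv hE1.le, hE]
    have expand : x * (Real.exp (α * x) * Real.exp (-α)) * (Real.exp α - 1)
        = x * Real.exp (α * x) * (Real.exp (-α) * Real.exp α)
          - x * (Real.exp (-α) * Real.exp (α * x)) := by ring
    rw [hsplit, expand, hEneg]
    linarith [h1]
  · intro B B' α x hB hBB hα hx
    obtain ⟨hx0, hx1⟩ := hx
    have hα0 : (0:ℝ) < α := lt_of_lt_of_le one_pos hα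
    have hc : 1 < (1 + 1 / B) ^ B := eB_lt hB
    have hd : (1 + 1 / B) ^ B ≤ (1 + 1 / B') ^ B' := eB_mono hB hBB
    have hc0 : (0:ℝ) ≤ (1 + 1 / B) ^ B := by linarith
    have hd0 : (0:ℝ) ≤ (1 + 1 / B') ^ B' := by linarith
    have hu : 1 < ((1 + 1 / B) ^ B) ^ α :=
      Real.one_lt_rpow_iff_of_pos (by linarith) |>.2 (Or.inl ⟨hc, hα0⟩)
    have huv : ((1 + 1 / B) ^ B) ^ α ≤ ((1 + 1 / B') ^ B') ^ α :=
      Real.rpow_le_rpow hc0 hd hα0.le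
    have h := key_slope hu huv hx0 hx1
    rwa [← Real.rpow_mul hc0, ← Real.rpow_mul hd0] at h
end

section
/- Let c > 1, α ≥ 1 and define, for x ∈ (0,1], G(x) := 1 + (1/(c^α − 1))·(1/x − 1)·(c^{αx} − 1). Then sup over x ∈ (0,1] of G(x) is at most 1 + (1/(c^α−1))·max{ln(c^α), (4/ln(c^α))·c^α·e^{−2}} when ln(c^α) > 2, and at most 1 + ln(c^α)/(c^α−1) when ln(c^α) ≤ 2. -/
open Real Set Filter Topology

private lemma auxv {v : ℝ} (hv : 0 ≤ v) : v ≤ Real.exp (v - 1) := by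
  have := Real.add_one_le_exp (v - 1); linarith

/-- bound on h(y) = L(1-y)² e^{Ly} by its peak value (4/L)e^{L-2}. -/
private lemma h_bound_big (L : ℝ) (hL : 0 < L) (y : ℝ) (hy : y ∈ Set.Icc (0:ℝ) 1) :
    L * (1 - y)^2 * Real.exp (L * y) ≤ 4 / L * Real.exp (L - 2) := by
  have hy1 : (0:ℝ) ≤ 1 - y := by linarith [hy.2]
  set v := L * (1 - y) / 2 with hv
  have hv0 : 0 ≤ v := by positivity
  have h1 : v ≤ Real.exp (v - 1) := auxv hv0
  have h2 : v ^ 2 ≤ Real.exp (v - 1) ^ 2 := by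
    apply pow_le_pow_left₀ hv0 h1
  have h3 : Real.exp (v - 1) ^ 2 = Real.exp (2 * v - 2) := by
    rw [sq, ← Real.exp_add]; ring_nf
  have key : v ^ 2 * Real.exp (L * y) ≤ Real.exp (L - 2) := by
    calc v ^ 2 * Real.exp (L * y) ≤ Real.exp (2 * v - 2) * Real.exp (L * y) := by
          rw [← h3]; exact mul_le_mul_of_nonneg_right h2 (Real.exp_pos _).le
      _ = Real.exp (2 * v - 2 + L * y) := (Real.exp_add _ _).symm
      _ = Real.exp (L - 2) := by rw [hv]; ring_nf
  have heq : L * (1 - y)^2 * Real.exp (L * y) = 4 / L * (v ^ 2 * Real.exp (L * y)) := by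
    rw [hv]; field_simp; ring
  rw [heq]
  have : (0:ℝ) ≤ 4 / L := by positivity
  calc 4 / L * (v ^ 2 * Real.exp (L * y)) ≤ 4 / L * Real.exp (L - 2) :=
    mul_le_mul_of_nonneg_left key this

/-- for L ≤ 2 the function h is bounded by L. -/
private lemma h_bound_small (L : ℝ) (hL : 0 < L) (hL2 : L ≤ 2) (y : ℝ)
    (hy : y ∈ Set.Icc (0:ℝ) 1) :
    L * (1 - y)^2 * Real.exp (L * y) ≤ L := by
  have hy0 := hy.1
  have hy1 : (0:ℝ) ≤ 1 - y := by linarith [hy.2]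
  have e1 : (1 - y) * Real.exp y ≤ 1 := by
    have h := Real.add_one_le_exp (-y)
    have h2 : 1 - y ≤ Real.exp (-y) := by linarith
    calc (1 - y) * Real.exp y ≤ Real.exp (-y) * Real.exp y :=
          mul_le_mul_of_nonneg_right h2 (Real.exp_pos _).le
      _ = 1 := by rw [← Real.exp_add]; simp
  have e2 : (1 - y)^2 * Real.exp (2 * y) ≤ 1 := by
    have : (1 - y)^2 * Real.exp (2 * y) = ((1 - y) * Real.exp y)^2 := by
      rw [mul_pow, sq (Real.exp y), ← Real.exp_add]; ring_nf
    rw [this]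
    calc ((1 - y) * Real.exp y)^2 ≤ 1^2 := by
          apply pow_le_pow_left₀ (by positivity) e1
      _ = 1 := one_pow 2
  have e3 : Real.exp (L * y) ≤ Real.exp (2 * y) := by
    apply Real.exp_le_exp.mpr; nlinarith
  calc L * (1 - y)^2 * Real.exp (L * y) ≤ L * (1 - y)^2 * Real.exp (2 * y) := by
        apply mul_le_mul_of_nonneg_left e3 (by positivity)
    _ = L * ((1 - y)^2 * Real.exp (2 * y)) := by ring
    _ ≤ L * 1 := mul_le_mul_of_nonneg_left e2 hL.le
    _ = L := mul_one L

/-- Main analytic lemma via the extreme value theorem. -/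
private lemma key_lemma (L M : ℝ) (hL : 0 < L) (hLM : L ≤ M) (hM0 : 0 ≤ M)
    (hh : ∀ y ∈ Set.Icc (0:ℝ) 1, L * (1 - y)^2 * Real.exp (L * y) ≤ M)
    (x : ℝ) (hx : x ∈ Set.Ioc (0:ℝ) 1) :
    (1 / x - 1) * (Real.exp (L * x) - 1) ≤ M := by
  obtain ⟨hx0, hx1⟩ := hx
  set E : ℝ → ℝ := fun y => if y = 0 then L else (Real.exp (L * y) - 1) / y with hE
  set F : ℝ → ℝ := fun y => (1 - y) * E y with hF
  have hE0 : ContinuousAt E 0 := by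
    have hd : HasDerivAt (fun y : ℝ => Real.exp (L * y)) L 0 := by
      have := ((hasDerivAt_id (0:ℝ)).const_mul L).exp
      simpa using this
    rw [hasDerivAt_iff_tendsto_slope] at hd
    have ht : Tendsto E (𝓝[≠] (0:ℝ)) (𝓝 L) := by
      refine hd.congr' ?_
      filter_upwards [self_mem_nhdsWithin] with y hy
      have hyne : y ≠ 0 := hy
      rw [slope_def_field]
      simp [hE, hyne]
    have hpure : Tendsto E (pure (0:ℝ)) (𝓝 L) := by
      have hE00 : E 0 = L := by simp [hE]
      rw [Filter.tendsto_pure_left]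
      intro s hs
      rw [hE00]; exact mem_of_mem_nhds hs
    have : Tendsto E (𝓝 0) (𝓝 L) := by
      rw [← nhdsNE_sup_pure (0:ℝ), Filter.tendsto_sup]
      exact ⟨ht, hpure⟩
    have hE00 : E 0 = L := by simp [hE]
    rw [ContinuousAt, hE00]; exact this
  have hEy : ∀ y : ℝ, y ≠ 0 → ContinuousAt E y := by
    intro y hy
    have hc : ContinuousAt (fun z : ℝ => (Real.exp (L * z) - 1) / z) y := by
      apply ContinuousAt.div
      · exact ((Real.continuous_exp.comp (continuous_const.mul continuous_id)).sub
          continuous_const).continuousAt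
      · exact continuousAt_id
      · exact hy
    apply hc.congr
    filter_upwards [isOpen_compl_singleton.mem_nhds hy] with z hz
    simp [hE, (by simpa using hz : z ≠ 0)]
  have hEcont : Continuous E := continuous_iff_continuousAt.mpr (fun y => by
    by_cases h : y = 0
    · subst h; exact hE0
    · exact hEy y h)
  have hFcont : Continuous F := (continuous_const.sub continuous_id).mul hEcont
  obtain ⟨m, hm, hmax⟩ := isCompact_Icc.exists_isMaxOn (α := ℝ) (s := Set.Icc 0 1)
    (nonempty_Icc.mpr zero_le_one) hFcont.continuousOn
  have hxm : F x ≤ F m := hmax ⟨hx0.le, hx1⟩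
  have hFx : (1 / x - 1) * (Real.exp (L * x) - 1) = F x := by
    simp only [hF, hE, if_neg hx0.ne']
    field_simp
    try ring
  rw [hFx]
  refine le_trans hxm ?_
  -- now show F m ≤ M
  rcases eq_or_lt_of_le hm.1 with h0 | h0
  · -- m = 0
    rw [← h0]
    show (1 - 0) * E 0 ≤ M
    simp only [hE, if_pos rfl]
    simpa using hLM
  rcases eq_or_lt_of_le hm.2 with h1 | h1
  · -- m = 1
    rw [h1]
    simp only [hF]
    simpa using hM0
  · -- 0 < m < 1
    set A := Real.exp (L * m) with hA
    have hmne : m ≠ 0 := ne_of_gt h0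
    have hloc : IsLocalMax F m := hmax.isLocalMax (Icc_mem_nhds h0 h1)
    set G : ℝ → ℝ := fun y => (1 - y) * ((Real.exp (L * y) - 1) / y) with hG
    have heq : F =ᶠ[𝓝 m] G := by
      filter_upwards [isOpen_compl_singleton.mem_nhds hmne] with z hz
      simp [hF, hE, hG, (by simpa using hz : z ≠ 0)]
    have hGd : HasDerivAt G
        ((-1) * ((A - 1) / m) + (1 - m) * ((L * A * m - (A - 1) * 1) / m ^ 2)) m := by
      have h1' : HasDerivAt (fun y : ℝ => 1 - y) (-1) m := by
        simpa using (hasDerivAt_id' m).const_sub (1:ℝ)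
      have h2' : HasDerivAt (fun y : ℝ => Real.exp (L * y) - 1) (L * A) m := by
        have := (((hasDerivAt_id m).const_mul L).exp).sub_const 1
        simpa [hA, mul_comm] using this
      exact h1'.mul (h2'.div (hasDerivAt_id m) hmne)
    have hd0 : (-1) * ((A - 1) / m) + (1 - m) * ((L * A * m - (A - 1) * 1) / m ^ 2) = 0 := by
      rw [← hGd.deriv, ← heq.deriv_eq]
      exact hloc.deriv_eq_zero
    have hrel : A - 1 = L * m * (1 - m) * A := by
      field_simp at hd0
      nlinarith [hd0]
    have hFm : F m = L * (1 - m)^2 * A := by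
      simp only [hF, hE, if_neg hmne]
      rw [← hA, hrel]
      field_simp
    rw [hFm]
    exact hh m ⟨hm.1, hm.2⟩

/-- Let `c > 1`, `α ≥ 1` and define, for `x ∈ (0,1]`,
`G x := 1 + (1/(c^α − 1))·(1/x − 1)·(c^(αx) − 1)`. Then `G x` is at most
`1 + (1/(c^α−1))·max{ln(c^α), (4/ln(c^α))·c^α·e^(−2)}` when `ln(c^α) > 2`, and at
most `1 + ln(c^α)/(c^α−1)` when `ln(c^α) ≤ 2`. -/
theorem stmt18 (c α : ℝ) (hc : 1 < c) (hα : 1 ≤ α) :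
    (2 < Real.log (c ^ α) →
      ∀ x ∈ Set.Ioc (0 : ℝ) 1,
        1 + 1 / (c ^ α - 1) * (1 / x - 1) * (c ^ (α * x) - 1) ≤
          1 + 1 / (c ^ α - 1) *
            max (Real.log (c ^ α)) (4 / Real.log (c ^ α) * c ^ α * Real.exp (-2))) ∧
    (Real.log (c ^ α) ≤ 2 →
      ∀ x ∈ Set.Ioc (0 : ℝ) 1,
        1 + 1 / (c ^ α - 1) * (1 / x - 1) * (c ^ (α * x) - 1) ≤
          1 + Real.log (c ^ α) / (c ^ α - 1)) := by
  have hc0 : (0:ℝ) < c := lt_trans one_pos hc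
  set L := Real.log (c ^ α) with hLdef
  have hLeq : L = α * Real.log c := by rw [hLdef, Real.log_rpow hc0]
  have hlogc : 0 < Real.log c := Real.log_pos hc
  have hL : 0 < L := by rw [hLeq]; positivity
  have hca : c ^ α = Real.exp L := by
    rw [hLdef, Real.exp_log (Real.rpow_pos_of_pos hc0 α)]
  have hca1 : 1 < c ^ α := by
    rw [hca]; calc (1:ℝ) = Real.exp 0 := Real.exp_zero.symm
      _ < Real.exp L := Real.exp_lt_exp.mpr hL
  have hden : 0 < c ^ α - 1 := by linarith
  have hcax : ∀ x : ℝ, c ^ (α * x) = Real.exp (L * x) := by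
    intro x
    rw [Real.rpow_def_of_pos hc0, hLeq]; ring_nf
  constructor
  · intro hL2 x hx
    set M := max L (4 / L * c ^ α * Real.exp (-2)) with hM
    have hMeq : 4 / L * c ^ α * Real.exp (-2) = 4 / L * Real.exp (L - 2) := by
      rw [hca, mul_assoc, ← Real.exp_add]; ring_nf
    have hg : (1 / x - 1) * (Real.exp (L * x) - 1) ≤ M := by
      apply key_lemma L M hL (le_max_left _ _) (le_trans hL.le (le_max_left _ _))
      · intro y hy
        refine le_trans (h_bound_big L hL y hy) ?_
        rw [← hMeq]; exact le_max_right _ _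
      · exact hx
    rw [hcax x]
    have h1 : 1 / (c ^ α - 1) * (1 / x - 1) * (Real.exp (L * x) - 1)
        = 1 / (c ^ α - 1) * ((1 / x - 1) * (Real.exp (L * x) - 1)) := by ring
    rw [h1]
    have := mul_le_mul_of_nonneg_left hg (le_of_lt (by positivity : (0:ℝ) < 1 / (c ^ α - 1)))
    linarith
  · intro hL2 x hx
    have hg : (1 / x - 1) * (Real.exp (L * x) - 1) ≤ L := by
      apply key_lemma L L hL le_rfl hL.le
      · exact fun y hy => h_bound_small L hL hL2 y hy
      · exact hx
    rw [hcax x]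
    have h1 : 1 / (c ^ α - 1) * (1 / x - 1) * (Real.exp (L * x) - 1)
        = 1 / (c ^ α - 1) * ((1 / x - 1) * (Real.exp (L * x) - 1)) := by ring
    rw [h1]
    have := mul_le_mul_of_nonneg_left hg (le_of_lt (by positivity : (0:ℝ) < 1 / (c ^ α - 1)))
    have h2 : L / (c ^ α - 1) = 1 / (c ^ α - 1) * L := by ring
    linarith [h2 ▸ this]
end
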